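/- Let W, V_1, ..., V_n be an isometric representation of the odometer semigroup O_n. If Σ_{k=1}^n V_k V_k* = I (the V_k form a row unitary), then W* V_1 = V_n W*. -/

import Mathlib

open ContinuousLinearMap

/- Insert `1 = ∑ V_k V_k*` in front of `W* V_1`: since `V_k* W* V_1 = (W V_k)* V_1` and `W V_k` is
`V_{k+1}` for `k < n`, all terms but the last vanish by orthogonality, while `W V_n = V_1 W` makes
the last one `V_n W* V_1* V_1 = V_n W*`. -/

theorem eq_mul_of_sum_mul_eq_one {R ι : Type*} [Semiring R] [Fintype ι] {v u : ι → R}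
    (h : ∑ k, v k * u k = 1) {t : R} (j : ι) (hj : ∀ k ≠ j, u k * t = 0) :
    t = v j * (u j * t) :=
  calc t = (∑ k, v k * u k) * t := by rw [h, one_mul]
    _ = ∑ k, v k * (u k * t) := by simp only [Finset.sum_mul, mul_assoc]
    _ = v j * (u j * t) :=
      Finset.sum_eq_single j (fun k _ hk => by rw [hj k hk, mul_zero])
        (fun hj' => absurd (Finset.mem_univ j) hj')

/-- For an isometric representation `{W, V_1, …, V_n}` of the odometer semigroup `O_n`
(indexed here by `Fin n`, with `V ⟨k⟩` playing the role of `V_{k+1}`):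
if `{V_1, …, V_n}` is a row unitary, then `W* V_1 = V_n W*`. -/
theorem stmt_8 {H : Type*} [NormedAddCommGroup H] [InnerProductSpace ℂ H] [CompleteSpace H]
    (n : ℕ) (hn : 0 < n) (W : H →L[ℂ] H) (V : Fin n → H →L[ℂ] H)
    (hViso : ∀ i, adjoint (V i) ∘L V i = 1)
    (horth : ∀ i j, i ≠ j → adjoint (V i) ∘L V j = 0)
    (hWV : ∀ i : Fin n, ∀ h : (i : ℕ) + 1 < n, W ∘L V i = V ⟨(i : ℕ) + 1, h⟩)
    (hWVn : W ∘L V ⟨n - 1, by omega⟩ = V ⟨0, hn⟩ ∘L W)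
    (hrowunit : ∑ k : Fin n, V k ∘L adjoint (V k) = 1) :
    adjoint W ∘L V ⟨0, hn⟩ = V ⟨n - 1, by omega⟩ ∘L adjoint W := by
  have hlast : adjoint (V ⟨n - 1, by omega⟩) ∘L (adjoint W ∘L V ⟨0, hn⟩) = adjoint W := by
    rw [← comp_assoc, ← adjoint_comp, hWVn, adjoint_comp, comp_assoc, hViso, one_def, comp_id]
  have hother : ∀ k ≠ ⟨n - 1, by omega⟩, adjoint (V k) ∘L (adjoint W ∘L V ⟨0, hn⟩) = 0 := by
    intro k hk
    have hk' : (k : ℕ) + 1 < n := by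
      simp only [Ne, Fin.ext_iff] at hk
      omega
    rw [← comp_assoc, ← adjoint_comp, hWV k hk', horth _ _ (by simp [Fin.ext_iff])]
  calc adjoint W ∘L V ⟨0, hn⟩
      = V ⟨n - 1, by omega⟩ ∘L (adjoint (V ⟨n - 1, by omega⟩) ∘L (adjoint W ∘L V ⟨0, hn⟩)) :=
        eq_mul_of_sum_mul_eq_one hrowunit _ hother
    _ = V ⟨n - 1, by omega⟩ ∘L adjoint W := by rw [hlast]
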